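/- arXiv:1906.01321 — 4 statements merged into one kernel-verified Lean document; each statement's English description precedes it below -/
import Mathlib

section
/- Let c : ℝ → ℝ be strictly convex and differentiable with c' bijective, and suppose β|s|^p ≥ s·c'(s) ≥ α|s|^p for all s, with 0 < α ≤ β and p > 1. Then for all r ∈ ℝ, writing p' = p/(p−1): β^{−1/(p−1)} |r|^{p'} ≤ r·(c')⁻¹(r) ≤ α^{−1/(p−1)} |r|^{p'}. -/
/-- two-sided power bounds on `s·c'(s)` yield two-sided power
bounds on `r·(c')⁻¹(r)` with the Hölder-conjugate exponent `p' = p/(p-1)`. -/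
theorem legendre_two_sided_bound (c c' : ℝ → ℝ) (α β p : ℝ)
    (hα : 0 < α) (hαβ : α ≤ β) (hp : 1 < p)
    (hconv : StrictConvexOn ℝ Set.univ c)
    (hderiv : ∀ s : ℝ, HasDerivAt c (c' s) s)
    (hbij : Function.Bijective c')
    (hlow : ∀ s : ℝ, α * |s| ^ p ≤ s * c' s)
    (hupp : ∀ s : ℝ, s * c' s ≤ β * |s| ^ p) :
    ∀ r : ℝ,
      β ^ (-(1 / (p - 1))) * |r| ^ (p / (p - 1)) ≤ r * Function.invFun c' r ∧
      r * Function.invFun c' r ≤ α ^ (-(1 / (p - 1))) * |r| ^ (p / (p - 1)) := by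
  have hβ : 0 < β := lt_of_lt_of_le hα hαβ
  have hp1 : 0 < p - 1 := by linarith
  set q : ℝ := 1 / (p - 1) with hqdef
  have hq : (0:ℝ) < q := by positivity
  have hq1 : (p - 1) * q = 1 := by rw [hqdef]; field_simp
  have hqp : q + 1 = p / (p - 1) := by
    rw [hqdef, div_add_one (ne_of_gt hp1)]
    congr 1
    ring
  -- c' 0 = 0
  have hc0 : c' 0 = 0 := by
    obtain ⟨s0, hs0⟩ := hbij.2 0
    have h := hlow s0
    rw [hs0, mul_zero] at h
    have hs00 : s0 = 0 := by
      by_contra hne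
      have : (0:ℝ) < α * |s0| ^ p := by positivity
      linarith
    exact hs00 ▸ hs0
  intro r
  set s := Function.invFun c' r with hs
  have hcs : c' s = r := Function.rightInverse_invFun hbij.2 r
  have h1 : α * |s| ^ p ≤ s * r := by rw [← hcs]; exact hlow s
  have h2 : s * r ≤ β * |s| ^ p := by rw [← hcs]; exact hupp s
  rcases eq_or_ne s 0 with hs0 | hs0
  · have hr0 : r = 0 := by rw [← hcs, hs0, hc0]
    rw [hr0, abs_zero, Real.zero_rpow (by positivity : p / (p - 1) ≠ 0)]
    simp
  · have ht : (0 : ℝ) < |s| := abs_pos.mpr hs0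
    have hsr_pos : 0 < s * r := lt_of_lt_of_le (by positivity) h1
    have hsr : s * r = |s| * |r| := by
      rw [← abs_mul]
      exact (abs_of_pos hsr_pos).symm
    have hR : (0:ℝ) < |r| := by
      rcases (mul_pos_iff.mp (hsr ▸ hsr_pos)) with ⟨_, h⟩ | ⟨h, _⟩
      · exact h
      · linarith
    have htp : |s| ^ p = |s| ^ (p - 1) * |s| := by
      rw [← Real.rpow_add_one (ne_of_gt ht) (p-1)]
      ring_nf
    have htpos : (0:ℝ) < |s| ^ (p - 1) := Real.rpow_pos_of_pos ht (p-1)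
    have hlow' : α * |s| ^ (p - 1) ≤ |r| := by
      have h' : α * (|s| ^ (p - 1) * |s|) ≤ |s| * |r| := by
        rw [← htp, ← hsr]; exact h1
      nlinarith
    have hupp' : |r| ≤ β * |s| ^ (p - 1) := by
      have h' : |s| * |r| ≤ β * (|s| ^ (p - 1) * |s|) := by
        rw [← htp, ← hsr]; exact h2
      nlinarith
    have key : ∀ γ : ℝ, 0 < γ → (γ * |s| ^ (p-1)) ^ q = γ ^ q * |s| := by
      intro γ hγ
      rw [Real.mul_rpow (le_of_lt hγ) (le_of_lt htpos),
        ← Real.rpow_mul (le_of_lt ht), hq1, Real.rpow_one]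
    -- bounds on |s|
    have hs_up : |s| ≤ α ^ (-q) * |r| ^ q := by
      have := Real.rpow_le_rpow (by positivity) hlow' (le_of_lt hq)
      rw [key α hα] at this
      rw [Real.rpow_neg (le_of_lt hα)]
      have hαq : (0:ℝ) < α ^ q := Real.rpow_pos_of_pos hα q
      rw [inv_mul_eq_div, le_div_iff₀ hαq]
      linarith [this]
    have hs_lo : β ^ (-q) * |r| ^ q ≤ |s| := by
      have := Real.rpow_le_rpow (le_of_lt hR) hupp' (le_of_lt hq)
      rw [key β hβ] at this
      rw [Real.rpow_neg (le_of_lt hβ)]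
      have hβq : (0:ℝ) < β ^ q := Real.rpow_pos_of_pos hβ q
      rw [inv_mul_eq_div, div_le_iff₀ hβq]
      linarith [this]
    have hRq : |r| ^ q * |r| = |r| ^ (p / (p-1)) := by
      rw [← Real.rpow_add_one (ne_of_gt hR) q, hqp]
    constructor
    · calc β ^ (-q) * |r| ^ (p / (p-1)) = (β ^ (-q) * |r| ^ q) * |r| := by
            rw [← hRq]; ring
        _ ≤ |s| * |r| := by
            exact mul_le_mul_of_nonneg_right hs_lo (le_of_lt hR)
        _ = r * s := by rw [← hsr]; ring
    · calc r * s = |s| * |r| := by rw [← hsr]; ring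
        _ ≤ (α ^ (-q) * |r| ^ q) * |r| :=
            mul_le_mul_of_nonneg_right hs_up (le_of_lt hR)
        _ = α ^ (-q) * |r| ^ (p / (p-1)) := by rw [← hRq]; ring
end

section
/- Let Φ : ℝ^{k−1} → ℝ ∪ {+∞} be defined on the open convex set K = {x ∈ ℝ^{k−1} : a < x₁ < x₂ < ... < x_{k−1} < b} (with x₀ = a, x_k = b fixed) by Φ(x) = τ·(1/k)·Σᵢ c((xᵢ − yᵢ)/τ) + (1/k)·Σᵢ h_X(k(x_{i+1} − xᵢ)) + (1/k)·Σᵢ v(xᵢ), where c is strictly convex and continuous, h_X is strictly convex, decreasing, with h_X(s) → ∞ as s → 0+, v is convex and continuous, y is a fixed point of the closure of K, and τ > 0. Then Φ attains a unique minimizer on the closure of K, and this minimizer lies in the open set K (i.e., all coordinates are strictly increasing). -/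
/-!
The constraint set (monotone vectors with pinned endpoints) is compact, and `Φ` is lower
semicontinuous: the only delicate term is the barrier `h_X`, which is `+∞` on `(-∞, 0]`, blows up
at `0`, and on `(0, ∞)` is antitone and midpoint convex, hence lower semicontinuous there. So a
minimizer exists. Since `Φ y < ∞`, a minimizer has no vanishing gap, i.e. it is strictly
increasing. On strictly increasing vectors `Φ` is real-valued and, thanks to the strict convexity
of `c`, strictly midpoint convex; the midpoint of two distinct minimizers would then do better.
-/

open scoped BigOperators

/-- The discrete one-step JKO functional `Φ(x) = τ·(1/k)·Σ c((xᵢ-yᵢ)/τ)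
+ (1/k)·Σ h_X(k(x_{i+1}-xᵢ)) + (1/k)·Σ v(xᵢ)`, with `EReal` values since
`h_X` takes the value `+∞` at nonpositive arguments. -/
noncomputable def discPhi (k : ℕ) (τ : ℝ) (c v : ℝ → ℝ) (hX : ℝ → EReal)
    (y x : Fin (k + 1) → ℝ) : EReal :=
  ((τ * (1 / (k : ℝ)) * ∑ i, c ((x i - y i) / τ)
      + (1 / (k : ℝ)) * ∑ i, v (x i) : ℝ) : EReal)
    + (((1 : ℝ) / (k : ℝ) : ℝ) : EReal)
        * ∑ i : Fin k, hX ((k : ℝ) * (x i.succ - x i.castSucc))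

open Set Filter Topology Finset

lemma exists_mem_Ico_lt_add_of_midpoint {f : ℝ → ℝ} {u₀ s : ℝ} (hu₀ : u₀ < s)
    (hmid : ∀ u ∈ Ico u₀ s, 2 * f ((u + s) / 2) ≤ f u + f s) {ε : ℝ} (hε : 0 < ε) :
    ∃ u ∈ Ico u₀ s, f u < f s + ε := by
  set u : ℕ → ℝ := fun n => s - (s - u₀) * (1 / 2) ^ n
  have hu : ∀ n, u n ∈ Ico u₀ s := fun n => by
    have h1 : (1 / 2 : ℝ) ^ n ≤ 1 := pow_le_one₀ (by norm_num) (by norm_num)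
    have h2 : 0 < (1 / 2 : ℝ) ^ n := by positivity
    constructor <;> nlinarith
  -- halving the distance to `s` at least halves the excess `f (u n) - f s`
  have hdecay : ∀ n, f (u n) - f s ≤ (f (u 0) - f s) * (1 / 2) ^ n := by
    intro n
    induction n with
    | zero => simp
    | succ n ih =>
      have hstep : u (n + 1) = (u n + s) / 2 := by simp only [u]; ring
      have := hmid _ (hu n)
      rw [hstep, pow_succ]
      linarith
  have hlim : Tendsto (fun n => (f (u 0) - f s) * (1 / 2 : ℝ) ^ n) atTop (𝓝 0) := by
    simpa using (tendsto_pow_atTop_nhds_zero_of_lt_one (r := (1 / 2 : ℝ)) (by norm_num)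
      (by norm_num)).const_mul (f (u 0) - f s)
  obtain ⟨n, hn⟩ := (hlim.eventually (gt_mem_nhds hε)).exists
  exact ⟨u n, hu n, by linarith [hdecay n]⟩

lemma AntitoneOn.lowerSemicontinuousAt_of_midpoint {f : ℝ → ℝ} {s : ℝ} (hs : 0 < s)
    (hanti : AntitoneOn f (Ioi 0))
    (hmid : ∀ u v, 0 < u → 0 < v → 2 * f ((u + v) / 2) ≤ f u + f v) :
    LowerSemicontinuousAt f s := by
  intro z hz
  obtain ⟨u, ⟨hu₀, hus⟩, hfu⟩ := exists_mem_Ico_lt_add_of_midpoint (half_lt_self hs)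
    (fun u hu => hmid u s (by linarith [hu.1]) hs) (sub_pos.2 hz)
  have hu : 0 < u := by linarith
  filter_upwards [Ioo_mem_nhds hus (by linarith : s < 2 * s - u)] with t ⟨hut, hts⟩
  rcases le_or_gt t s with hle | hlt
  · linarith [hanti (mem_Ioi.2 (hu.trans hut)) (mem_Ioi.2 hs) hle]
  · -- `s` is the midpoint of `u` and `2 s - u`, and `f u` is close to `f s`
    have hreflect := hmid u (2 * s - u) hu (by linarith)
    rw [show (u + (2 * s - u)) / 2 = s by ring] at hreflect
    linarith [hanti (mem_Ioi.2 (hs.trans hlt)) (mem_Ioi.2 (by linarith : 0 < 2 * s - u)) hts.le]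

namespace EReal

lemma continuous_coe_mul (r : ℝ) : Continuous fun x : EReal => (r : EReal) * x := by
  rcases eq_or_ne r 0 with rfl | hr
  · simpa using continuous_const
  · have hr' : (r : EReal) ≠ 0 := by exact_mod_cast hr
    refine continuous_iff_continuousAt.2 fun x => ?_
    exact (continuousAt_mul (.inl hr') (.inl hr') (.inl (coe_ne_bot r)) (.inl (coe_ne_top r))).comp
      (continuousAt_const.prodMk continuousAt_id)

lemma coe_finset_sum {ι : Type*} (s : Finset ι) (f : ι → ℝ) :
    ((∑ i ∈ s, f i : ℝ) : EReal) = ∑ i ∈ s, (f i : EReal) :=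
  map_sum (⟨⟨Real.toEReal, coe_zero⟩, coe_add⟩ : ℝ →+ EReal) f s

end EReal

lemma LowerSemicontinuous.ereal_add {α : Type*} [TopologicalSpace α] {f g : α → EReal}
    (hf : LowerSemicontinuous f) (hg : LowerSemicontinuous g) :
    LowerSemicontinuous fun x => f x + g x := by
  intro x
  by_cases hfx : f x = ⊥
  · intro z hz; simp [hfx] at hz
  by_cases hgx : g x = ⊥
  · intro z hz; simp [hgx] at hz
  exact LowerSemicontinuousAt.add' (hf x) (hg x) (EReal.continuousAt_add (.inr hgx) (.inl hfx))

lemma LowerSemicontinuous.ereal_sum {α ι : Type*} [TopologicalSpace α] (s : Finset ι)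
    {f : ι → α → EReal} (hf : ∀ i ∈ s, LowerSemicontinuous (f i)) :
    LowerSemicontinuous fun x => ∑ i ∈ s, f i x := by
  classical
  induction s using Finset.induction_on with
  | empty => simpa using lowerSemicontinuous_const
  | insert i s hi ih =>
    simp only [Finset.sum_insert hi]
    exact (hf i (mem_insert_self i s)).ereal_add (ih fun j hj => hf j (mem_insert_of_mem hj))

lemma LowerSemicontinuous.ereal_coe_mul {α : Type*} [TopologicalSpace α] {f : α → EReal}
    (hf : LowerSemicontinuous f) {r : ℝ} (hr : 0 ≤ r) :
    LowerSemicontinuous fun x => (r : EReal) * f x :=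
  (EReal.continuous_coe_mul r).comp_lowerSemicontinuous hf
    fun _ _ h => mul_le_mul_of_nonneg_left h (by exact_mod_cast hr)

section Barrier

variable {h : ℝ → EReal}

lemma two_mul_toReal_midpoint_le (hfin : ∀ s : ℝ, 0 < s → h s ≠ ⊤ ∧ h s ≠ ⊥)
    (hsconv : ∀ s t : ℝ, 0 < s → 0 < t → s ≠ t → (2 : EReal) * h ((s + t) / 2) < h s + h t)
    {u v : ℝ} (hu : 0 < u) (hv : 0 < v) :
    2 * (h ((u + v) / 2)).toReal ≤ (h u).toReal + (h v).toReal := by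
  rcases eq_or_ne u v with rfl | huv
  · rw [add_self_div_two]; linarith
  have hlt := hsconv u v hu hv huv
  have hm : 0 < (u + v) / 2 := by positivity
  rw [← EReal.coe_toReal (hfin u hu).1 (hfin u hu).2,
    ← EReal.coe_toReal (hfin v hv).1 (hfin v hv).2,
    ← EReal.coe_toReal (hfin _ hm).1 (hfin _ hm).2] at hlt
  rw [← EReal.coe_add, show (2 : EReal) = ((2 : ℝ) : EReal) from rfl, ← EReal.coe_mul] at hlt
  exact_mod_cast hlt.le

lemma lowerSemicontinuous_of_antitoneOn_of_midpoint
    (hfin : ∀ s : ℝ, 0 < s → h s ≠ ⊤ ∧ h s ≠ ⊥) (hinf : ∀ s : ℝ, s ≤ 0 → h s = ⊤)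
    (hmid : ∀ u v : ℝ, 0 < u → 0 < v →
      2 * (h ((u + v) / 2)).toReal ≤ (h u).toReal + (h v).toReal)
    (hanti : AntitoneOn h (Ioi 0)) (hblow : Tendsto h (𝓝[>] 0) (𝓝 ⊤)) :
    LowerSemicontinuous h := by
  intro s z hz
  rcases lt_trichotomy s 0 with hs | rfl | hs
  · filter_upwards [Iio_mem_nhds hs] with t ht
    rwa [hinf t ht.le, ← hinf s hs.le]
  · rw [hinf 0 le_rfl] at hz
    filter_upwards [eventually_nhdsWithin_iff.1 (hblow.eventually (lt_mem_nhds hz))] with t ht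
    rcases le_or_gt t 0 with ht0 | ht0
    · rwa [hinf t ht0]
    · exact ht ht0
  · have hanti' : AntitoneOn (fun t => (h t).toReal) (Ioi 0) := fun u hu v hv huv =>
      EReal.toReal_le_toReal (hanti hu hv huv) (hfin v hv).2 (hfin u hu).1
    have hcoe : ∀ t, 0 < t → ((h t).toReal : EReal) = h t := fun t ht =>
      EReal.coe_toReal (hfin t ht).1 (hfin t ht).2
    have hlsc := continuous_coe_real_ereal.continuousAt.comp_lowerSemicontinuousAt
      (hanti'.lowerSemicontinuousAt_of_midpoint hs hmid) EReal.coe_strictMono.monotone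
    filter_upwards [hlsc z (by simpa [hcoe s hs] using hz), Ioi_mem_nhds hs] with t ht ht0
    simpa [hcoe t ht0] using ht

end Barrier

lemma ConvexOn.two_mul_map_add_div_two_le {g : ℝ → ℝ} (hg : ConvexOn ℝ univ g) (p q : ℝ) :
    2 * g ((p + q) / 2) ≤ g p + g q := by
  have h := hg.2 (mem_univ p) (mem_univ q) (by norm_num : (0 : ℝ) ≤ 1 / 2)
    (by norm_num : (0 : ℝ) ≤ 1 / 2) (by norm_num)
  simp only [smul_eq_mul] at h
  rw [show (p + q) / 2 = 1 / 2 * p + 1 / 2 * q by ring]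
  linarith

lemma StrictConvexOn.two_mul_map_add_div_two_lt {g : ℝ → ℝ} (hg : StrictConvexOn ℝ univ g)
    {p q : ℝ} (hpq : p ≠ q) : 2 * g ((p + q) / 2) < g p + g q := by
  have h := hg.2 (mem_univ p) (mem_univ q) hpq (by norm_num : (0 : ℝ) < 1 / 2)
    (by norm_num : (0 : ℝ) < 1 / 2) (by norm_num)
  simp only [smul_eq_mul] at h
  rw [show (p + q) / 2 = 1 / 2 * p + 1 / 2 * q by ring]
  linarith

/-- The closure of `K`. -/
def pinnedMonotone (k : ℕ) (a b : ℝ) : Set (Fin (k + 1) → ℝ) :=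
  {x | x 0 = a ∧ x (Fin.last k) = b ∧ Monotone x}

lemma isCompact_pinnedMonotone (k : ℕ) (a b : ℝ) : IsCompact (pinnedMonotone k a b) := by
  have hclosed : IsClosed (pinnedMonotone k a b) :=
    (isClosed_eq (continuous_apply 0) continuous_const).inter
      ((isClosed_eq (continuous_apply _) continuous_const).inter isClosed_monotone)
  refine (isCompact_univ_pi fun _ => isCompact_Icc (a := a) (b := b)).of_isClosed_subset hclosed ?_
  rintro x ⟨h0, hlast, hmono⟩ i -
  exact ⟨h0 ▸ hmono (Fin.zero_le i), hlast ▸ hmono (Fin.le_last i)⟩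

lemma add_div_two_mem_pinnedMonotone {k : ℕ} {a b : ℝ} {w z : Fin (k + 1) → ℝ}
    (hw : w ∈ pinnedMonotone k a b) (hz : z ∈ pinnedMonotone k a b) :
    (fun i => (w i + z i) / 2) ∈ pinnedMonotone k a b := by
  obtain ⟨hw0, hwl, hwm⟩ := hw
  obtain ⟨hz0, hzl, hzm⟩ := hz
  refine ⟨?_, ?_, (hwm.add hzm).div_const zero_le_two⟩
  · simp [hw0, hz0]
  · simp [hwl, hzl]

lemma StrictMono.natCast_mul_sub_pos {k : ℕ} {x : Fin (k + 1) → ℝ} (hx : StrictMono x)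
    (i : Fin k) : 0 < (k : ℝ) * (x i.succ - x i.castSucc) :=
  mul_pos (by exact_mod_cast i.pos) (sub_pos.2 (hx i.castSucc_lt_succ))

noncomputable def discPhiReal (k : ℕ) (τ : ℝ) (c v f : ℝ → ℝ) (y x : Fin (k + 1) → ℝ) : ℝ :=
  τ * (1 / (k : ℝ)) * ∑ i, c ((x i - y i) / τ) + (1 / (k : ℝ)) * ∑ i, v (x i)
    + (1 / (k : ℝ)) * ∑ i : Fin k, f ((k : ℝ) * (x i.succ - x i.castSucc))

section discPhi

variable {k : ℕ} {τ : ℝ} {c v : ℝ → ℝ} {hX : ℝ → EReal} {y : Fin (k + 1) → ℝ}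

lemma lowerSemicontinuous_discPhi (hc : Continuous c) (hv : Continuous v)
    (hX_lsc : LowerSemicontinuous hX) : LowerSemicontinuous (discPhi k τ c v hX y) := by
  have hreal : Continuous fun x : Fin (k + 1) → ℝ =>
      τ * (1 / (k : ℝ)) * ∑ i, c ((x i - y i) / τ) + (1 / (k : ℝ)) * ∑ i, v (x i) := by
    fun_prop
  exact (continuous_coe_real_ereal.comp hreal).lowerSemicontinuous.ereal_add
    ((LowerSemicontinuous.ereal_sum _ fun i _ => hX_lsc.comp (by fun_prop)).ereal_coe_mul
      (by positivity))

lemma discPhi_eq_top (hX_inf : ∀ s : ℝ, s ≤ 0 → hX s = ⊤) (hX_bot : ∀ s, hX s ≠ ⊥)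
    {x : Fin (k + 1) → ℝ} (i : Fin k) (hi : x i.succ ≤ x i.castSucc) :
    discPhi k τ c v hX y x = ⊤ := by
  have hk : (0 : ℝ) < k := by exact_mod_cast i.pos
  have hsum : ∑ j : Fin k, hX ((k : ℝ) * (x j.succ - x j.castSucc)) = ⊤ := by
    rw [← add_sum_erase _ _ (mem_univ i), hX_inf _ (by nlinarith),
      EReal.top_add_of_ne_bot
      (sum_induction _ (· ≠ ⊥) (fun _ _ ha hb => EReal.add_ne_bot_iff.2 ⟨ha, hb⟩) (by simp)
        fun j _ => hX_bot _)]
  rw [discPhi, hsum, EReal.coe_mul_top_of_pos (by positivity), EReal.coe_add_top]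

lemma strictMono_of_discPhi_ne_top (hX_inf : ∀ s : ℝ, s ≤ 0 → hX s = ⊤)
    (hX_bot : ∀ s, hX s ≠ ⊥) {x : Fin (k + 1) → ℝ}
    (hΦ : discPhi k τ c v hX y x ≠ ⊤) : StrictMono x := by
  refine Fin.strictMono_iff_lt_succ.2 fun i => ?_
  by_contra! hi
  exact hΦ (discPhi_eq_top hX_inf hX_bot i hi)

lemma discPhi_eq_coe_discPhiReal (hX_fin : ∀ s : ℝ, 0 < s → hX s ≠ ⊤ ∧ hX s ≠ ⊥)
    {x : Fin (k + 1) → ℝ} (hx : StrictMono x) :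
    discPhi k τ c v hX y x = discPhiReal k τ c v (fun s => (hX s).toReal) y x := by
  have hsum : ∑ i : Fin k, hX ((k : ℝ) * (x i.succ - x i.castSucc))
      = ((∑ i : Fin k, (hX ((k : ℝ) * (x i.succ - x i.castSucc))).toReal : ℝ) : EReal) := by
    rw [EReal.coe_finset_sum]
    refine sum_congr rfl fun i _ => ?_
    have hi := hX_fin _ (hx.natCast_mul_sub_pos i)
    exact (EReal.coe_toReal hi.1 hi.2).symm
  rw [discPhi, discPhiReal, hsum, ← EReal.coe_mul, ← EReal.coe_add]

lemma two_mul_discPhiReal_add_div_two_lt (hk : 0 < k) (hτ : 0 < τ)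
    (hc : StrictConvexOn ℝ univ c) (hv : ConvexOn ℝ univ v) {f : ℝ → ℝ}
    (hf : ∀ u v : ℝ, 0 < u → 0 < v → 2 * f ((u + v) / 2) ≤ f u + f v)
    {w z : Fin (k + 1) → ℝ} (hw : StrictMono w) (hz : StrictMono z) (hwz : w ≠ z) :
    2 * discPhiReal k τ c v f y (fun i => (w i + z i) / 2)
      < discPhiReal k τ c v f y w + discPhiReal k τ c v f y z := by
  obtain ⟨i₀, hi₀⟩ := Function.ne_iff.1 hwz
  have hC : 2 * ∑ i, c (((w i + z i) / 2 - y i) / τ)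
      < ∑ i, c ((w i - y i) / τ) + ∑ i, c ((z i - y i) / τ) := by
    rw [mul_sum, ← sum_add_distrib]
    refine sum_lt_sum (fun i _ => ?_) ⟨i₀, mem_univ _, ?_⟩
    · rw [show ((w i + z i) / 2 - y i) / τ = ((w i - y i) / τ + (z i - y i) / τ) / 2 by ring]
      exact hc.convexOn.two_mul_map_add_div_two_le _ _
    · rw [show ((w i₀ + z i₀) / 2 - y i₀) / τ = ((w i₀ - y i₀) / τ + (z i₀ - y i₀) / τ) / 2 by
        ring]
      exact hc.two_mul_map_add_div_two_lt fun h => hi₀ (by field_simp at h; linarith)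
  have hV : 2 * ∑ i, v ((w i + z i) / 2) ≤ ∑ i, v (w i) + ∑ i, v (z i) := by
    rw [mul_sum, ← sum_add_distrib]
    exact sum_le_sum fun i _ => hv.two_mul_map_add_div_two_le _ _
  have hH : 2 * ∑ i : Fin k,
        f ((k : ℝ) * ((w i.succ + z i.succ) / 2 - (w i.castSucc + z i.castSucc) / 2))
      ≤ ∑ i : Fin k, f ((k : ℝ) * (w i.succ - w i.castSucc))
        + ∑ i : Fin k, f ((k : ℝ) * (z i.succ - z i.castSucc)) := by
    rw [mul_sum, ← sum_add_distrib]
    refine sum_le_sum fun i _ => ?_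
    rw [show (k : ℝ) * ((w i.succ + z i.succ) / 2 - (w i.castSucc + z i.castSucc) / 2)
      = ((k : ℝ) * (w i.succ - w i.castSucc) + (k : ℝ) * (z i.succ - z i.castSucc)) / 2 by ring]
    exact hf _ _ (hw.natCast_mul_sub_pos i) (hz.natCast_mul_sub_pos i)
  have hk' : (0 : ℝ) < 1 / k := by positivity
  have := mul_lt_mul_of_pos_left hC (mul_pos hτ hk')
  have := mul_le_mul_of_nonneg_left hV hk'.le
  have := mul_le_mul_of_nonneg_left hH hk'.le
  simp only [discPhiReal]
  linarith

lemma eq_of_isMinOn_discPhi {a b : ℝ} (hk : 0 < k) (hτ : 0 < τ)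
    (hc : StrictConvexOn ℝ univ c) (hv : ConvexOn ℝ univ v)
    (hX_fin : ∀ s : ℝ, 0 < s → hX s ≠ ⊤ ∧ hX s ≠ ⊥)
    (hX_mid : ∀ u v : ℝ, 0 < u → 0 < v →
      2 * (hX ((u + v) / 2)).toReal ≤ (hX u).toReal + (hX v).toReal)
    {w z : Fin (k + 1) → ℝ} (hwS : w ∈ pinnedMonotone k a b) (hzS : z ∈ pinnedMonotone k a b)
    (hw : StrictMono w) (hz : StrictMono z)
    (hwmin : IsMinOn (discPhi k τ c v hX y) (pinnedMonotone k a b) w)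
    (hzmin : IsMinOn (discPhi k τ c v hX y) (pinnedMonotone k a b) z) : w = z := by
  by_contra hwz
  have hm : StrictMono fun i => (w i + z i) / 2 := (hw.add hz).div_const two_pos
  have hwz_le := isMinOn_iff.1 hwmin z hzS
  have hzm_le := isMinOn_iff.1 hzmin _ (add_div_two_mem_pinnedMonotone hwS hzS)
  rw [discPhi_eq_coe_discPhiReal hX_fin hw, discPhi_eq_coe_discPhiReal hX_fin hz] at hwz_le
  rw [discPhi_eq_coe_discPhiReal hX_fin hz, discPhi_eq_coe_discPhiReal hX_fin hm] at hzm_le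
  have := two_mul_discPhiReal_add_div_two_lt (y := y) (f := fun s => (hX s).toReal) hk hτ hc hv
    hX_mid hw hz hwz
  have : _ ≤ _ := EReal.coe_le_coe_iff.1 hwz_le
  have : _ ≤ _ := EReal.coe_le_coe_iff.1 hzm_le
  linarith

end discPhi

theorem discrete_JKO_wellposed_general (k : ℕ) (hk : 0 < k) (a b τ : ℝ)
    (hτ : 0 < τ)
    (c v : ℝ → ℝ) (hX : ℝ → EReal)
    (hc_conv : StrictConvexOn ℝ Set.univ c) (hc_cont : Continuous c)
    (hv_conv : ConvexOn ℝ Set.univ v) (hv_cont : Continuous v)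
    (hX_fin : ∀ s : ℝ, 0 < s → hX s ≠ ⊤ ∧ hX s ≠ ⊥)
    (hX_inf : ∀ s : ℝ, s ≤ 0 → hX s = ⊤)
    (hX_sconv : ∀ s t : ℝ, 0 < s → 0 < t → s ≠ t →
      (2 : EReal) * hX ((s + t) / 2) < hX s + hX t)
    (hX_anti : AntitoneOn hX (Set.Ioi 0))
    (hX_blow : Filter.Tendsto hX (nhdsWithin 0 (Set.Ioi 0)) (nhds ⊤))
    (y : Fin (k + 1) → ℝ)
    (hy : y 0 = a ∧ y (Fin.last k) = b ∧ StrictMono y) :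
    ∃! x : Fin (k + 1) → ℝ,
      (x 0 = a ∧ x (Fin.last k) = b ∧ Monotone x) ∧
      (∀ w : Fin (k + 1) → ℝ, w 0 = a → w (Fin.last k) = b → Monotone w →
        discPhi k τ c v hX y x ≤ discPhi k τ c v hX y w) ∧
      StrictMono x := by
  obtain ⟨hy0, hyl, hy⟩ := hy
  have hyS : y ∈ pinnedMonotone k a b := ⟨hy0, hyl, hy.monotone⟩
  have hX_bot (s : ℝ) : hX s ≠ ⊥ := by
    rcases le_or_gt s 0 with hs | hs
    · simp [hX_inf s hs]
    · exact (hX_fin s hs).2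
  have hX_mid (u v : ℝ) (hu : 0 < u) (hv : 0 < v) :=
    two_mul_toReal_midpoint_le hX_fin hX_sconv hu hv
  have hX_lsc :=
    lowerSemicontinuous_of_antitoneOn_of_midpoint hX_fin hX_inf hX_mid hX_anti hX_blow
  have hstrict {x} (hx : IsMinOn (discPhi k τ c v hX y) (pinnedMonotone k a b) x) : StrictMono x :=
    strictMono_of_discPhi_ne_top hX_inf hX_bot <| ne_top_of_le_ne_top
      (by rw [discPhi_eq_coe_discPhiReal hX_fin hy]; exact EReal.coe_ne_top _)
      (isMinOn_iff.1 hx y hyS)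
  obtain ⟨x, hxS, hxmin⟩ := LowerSemicontinuousOn.exists_isMinOn ⟨y, hyS⟩
    (isCompact_pinnedMonotone k a b)
    ((lowerSemicontinuous_discPhi hc_cont hv_cont hX_lsc).lowerSemicontinuousOn _)
  refine ⟨x, ⟨hxS, fun w h0 hl hm => isMinOn_iff.1 hxmin w ⟨h0, hl, hm⟩, hstrict hxmin⟩, ?_⟩
  rintro w ⟨hwS, hwmin, hw⟩
  exact eq_of_isMinOn_discPhi hk hτ hc_conv hv_conv hX_fin hX_mid hwS hxS hw (hstrict hxmin)
    (isMinOn_iff.2 fun u hu => hwmin u hu.1 hu.2.1 hu.2.2) hxmin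

/-- the discrete JKO minimization problem has a unique minimizer
over the closed simplex of monotone vectors with pinned endpoints, and the
minimizer has strictly increasing coordinates. -/
theorem discrete_JKO_wellposed (k : ℕ) (hk : 0 < k) (a b τ : ℝ)
    (hab : a < b) (hτ : 0 < τ)
    (c v : ℝ → ℝ) (hX : ℝ → EReal)
    (hc_conv : StrictConvexOn ℝ Set.univ c) (hc_cont : Continuous c)
    (hv_conv : ConvexOn ℝ Set.univ v) (hv_cont : Continuous v)
    (hX_fin : ∀ s : ℝ, 0 < s → hX s ≠ ⊤ ∧ hX s ≠ ⊥)
    (hX_inf : ∀ s : ℝ, s ≤ 0 → hX s = ⊤)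
    (hX_sconv : ∀ s t : ℝ, 0 < s → 0 < t → s ≠ t →
      (2 : EReal) * hX ((s + t) / 2) < hX s + hX t)
    (hX_anti : AntitoneOn hX (Set.Ioi 0))
    (hX_blow : Filter.Tendsto hX (nhdsWithin 0 (Set.Ioi 0)) (nhds ⊤))
    (y : Fin (k + 1) → ℝ)
    (hy : y 0 = a ∧ y (Fin.last k) = b ∧ StrictMono y) :
    ∃! x : Fin (k + 1) → ℝ,
      (x 0 = a ∧ x (Fin.last k) = b ∧ Monotone x) ∧
      (∀ w : Fin (k + 1) → ℝ, w 0 = a → w (Fin.last k) = b → Monotone w →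
        discPhi k τ c v hX y x ≤ discPhi k τ c v hX y w) ∧
      StrictMono x :=
  discrete_JKO_wellposed_general k hk a b τ hτ c v hX hc_conv hc_cont hv_conv hv_cont hX_fin hX_inf
    hX_sconv hX_anti hX_blow y hy
end

section
/- Let x⁽ⁿ⁾ ∈ ℝ^{k+1} with a = x₀⁽ⁿ⁾ < ... < x_k⁽ⁿ⁾ = b, and suppose its forward difference quotients δxᵢ⁽ⁿ⁾ = k(x_{i+1}⁽ⁿ⁾ − xᵢ⁽ⁿ⁾) satisfy the system δxᵢ⁽ⁿ⁾ − δxᵢ⁽ⁿ⁻¹⁾ = τ·g_i(δ²[h'(δx⁽ⁿ⁾)]ᵢ) for i = 0,...,k−1, where each g_i is increasing with g_i(0) = 0, h' is an increasing function, and δ² denotes the second symmetric difference with appropriate boundary conventions. If i is an index where δxᵢ⁽ⁿ⁾ is maximal over all i, then δ²[h'(δx⁽ⁿ⁾)]ᵢ ≤ 0 and consequently δxᵢ⁽ⁿ⁾ ≤ δxᵢ⁽ⁿ⁻¹⁾. -/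
/-- kernel of the discrete maximum principle. If the difference
quotients satisfy `bⱼ - aⱼ = τ·gⱼ(Dⱼ)` with `gⱼ` increasing, `gⱼ(0) = 0`,
where `D` is the second symmetric difference of `h'(b)` (with one-sided
boundary conventions) and `h'` is increasing, then at an index `i` where
`bᵢ` is maximal one has `Dᵢ ≤ 0` and consequently `bᵢ ≤ aᵢ`. -/
theorem discrete_max_principle_kernel (k : ℕ) (hk : 2 ≤ k) (τ : ℝ) (hτ : 0 < τ)
    (a b D : ℕ → ℝ) (h' : ℝ → ℝ) (hh' : Monotone h')
    (g : ℕ → ℝ → ℝ) (hg : ∀ j, Monotone (g j)) (hg0 : ∀ j, g j 0 = 0)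
    (hDint : ∀ j, 0 < j → j < k - 1 →
      D j = (k : ℝ) ^ 2 * (h' (b (j + 1)) - 2 * h' (b j) + h' (b (j - 1))))
    (hD0 : D 0 = (k : ℝ) ^ 2 * (h' (b 1) - h' (b 0)))
    (hDlast : D (k - 1) = (k : ℝ) ^ 2 * (h' (b (k - 2)) - h' (b (k - 1))))
    (hupd : ∀ j, j < k → b j - a j = τ * g j (D j))
    (i : ℕ) (hi : i < k) (hmax : ∀ j, j < k → b j ≤ b i) :
    D i ≤ 0 ∧ b i ≤ a i := by
  have hk2 : (0:ℝ) ≤ (k:ℝ)^2 := sq_nonneg _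
  have hD : D i ≤ 0 := by
    rcases Nat.eq_zero_or_pos i with h0 | hpos
    · subst h0
      rw [hD0]
      have h1 : b 1 ≤ b 0 := hmax 1 (by omega)
      have := hh' h1
      nlinarith
    · rcases eq_or_lt_of_le (Nat.lt_iff_add_one_le.mp hi) with hlast | hlt
      · have : i = k - 1 := by omega
        subst this
        rw [hDlast]
        have h1 : b (k-2) ≤ b (k-1) := hmax _ (by omega)
        have := hh' h1
        nlinarith
      · have hint : i < k - 1 := by omega
        rw [hDint i hpos hint]
        have h1 : b (i+1) ≤ b i := hmax _ (by omega)
        have h2 : b (i-1) ≤ b i := hmax _ (by omega)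
        have := hh' h1
        have := hh' h2
        nlinarith
  refine ⟨hD, ?_⟩
  have := hupd i hi
  have hgle : g i (D i) ≤ 0 := by
    calc g i (D i) ≤ g i 0 := hg i hD
    _ = 0 := hg0 i
  nlinarith
end

section
/- Let M̄ ≥ m̲ > 0 and let (aᵢ), (bᵢ) ∈ ℝ^k with m̲ ≤ aᵢ ≤ M̄ for all i. Suppose for each i: bᵢ − aᵢ = τ·φ'(ζᵢ)·(δ²[h'(b)]ᵢ) where φ' ≥ 0, h' is strictly increasing, and δ²[h'(b)]ᵢ := k²·(h'(b_{i+1}) − 2h'(bᵢ) + h'(b_{i−1})) with convention δ²[h'(b)]ᵢ ≤ 0 at boundary indices where bᵢ is maximal. Then max_i bᵢ ≤ max_i aᵢ = M̄ and min_i bᵢ ≥ m̲; i.e. the discrete scheme with no potential (v = const) satisfies the minimum/maximum principle m̲ ≤ δxᵢ⁽ⁿ⁾ ≤ M̄. -/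
/-- discrete minimum/maximum principle for the implicit
Lagrangian scheme without external potential: the new difference quotients
`bᵢ`, obtained from the old ones `aᵢ ∈ [m̲, M̄]` by the differenced
Euler–Lagrange update `bᵢ - aᵢ = τ·φᵢ·Dᵢ` with `φᵢ ≥ 0` and `D` the second
difference of `h'(b)` (nonpositive/nonnegative boundary conventions at
extremal boundary indices), stay in `[m̲, M̄]`. -/
theorem discrete_min_max_principle (k : ℕ) (hk : 0 < k) (τ : ℝ) (hτ : 0 < τ)
    (mlow Mbar : ℝ) (hm : 0 < mlow) (hmM : mlow ≤ Mbar)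
    (a b D φ : ℕ → ℝ)
    (ha : ∀ i, i < k → mlow ≤ a i ∧ a i ≤ Mbar)
    (h' : ℝ → ℝ) (hh' : StrictMono h')
    (hφ : ∀ i, i < k → 0 ≤ φ i)
    (hupd : ∀ i, i < k → b i - a i = τ * φ i * D i)
    (hDint : ∀ j, 0 < j → j < k - 1 →
      D j = (k : ℝ) ^ 2 * (h' (b (j + 1)) - 2 * h' (b j) + h' (b (j - 1))))
    (hDmax : ∀ j, j < k → (j = 0 ∨ j = k - 1) → (∀ l, l < k → b l ≤ b j) → D j ≤ 0)
    (hDmin : ∀ j, j < k → (j = 0 ∨ j = k - 1) → (∀ l, l < k → b j ≤ b l) → 0 ≤ D j) :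
    ∀ i, i < k → mlow ≤ b i ∧ b i ≤ Mbar := by
  -- max index
  obtain ⟨j, hjk, hjmax⟩ : ∃ j ∈ Finset.range k, ∀ l ∈ Finset.range k, b l ≤ b j := by
    apply Finset.exists_max_image
    exact ⟨0, Finset.mem_range.2 hk⟩
  rw [Finset.mem_range] at hjk
  have hjmax' : ∀ l, l < k → b l ≤ b j := fun l hl => hjmax l (Finset.mem_range.2 hl)
  obtain ⟨i', hik, hjmin⟩ : ∃ j ∈ Finset.range k, ∀ l ∈ Finset.range k, b j ≤ b l := by
    apply Finset.exists_min_image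
    exact ⟨0, Finset.mem_range.2 hk⟩
  rw [Finset.mem_range] at hik
  have hjmin' : ∀ l, l < k → b i' ≤ b l := fun l hl => hjmin l (Finset.mem_range.2 hl)
  have hDj : D j ≤ 0 := by
    by_cases hb : j = 0 ∨ j = k - 1
    · exact hDmax j hjk hb hjmax'
    · push_neg at hb
      have h0 : 0 < j := Nat.pos_of_ne_zero hb.1
      have h1 : j < k - 1 := lt_of_le_of_ne (Nat.le_sub_one_of_lt hjk) hb.2
      rw [hDint j h0 h1]
      have e1 : h' (b (j + 1)) ≤ h' (b j) :=
        hh'.monotone (hjmax' _ (by omega))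
      have e2 : h' (b (j - 1)) ≤ h' (b j) :=
        hh'.monotone (hjmax' _ (by omega))
      have : h' (b (j + 1)) - 2 * h' (b j) + h' (b (j - 1)) ≤ 0 := by linarith
      have hk2 : (0:ℝ) ≤ (k : ℝ) ^ 2 := by positivity
      exact mul_nonpos_of_nonneg_of_nonpos hk2 this
  have hDi : 0 ≤ D i' := by
    by_cases hb : i' = 0 ∨ i' = k - 1
    · exact hDmin i' hik hb hjmin'
    · push_neg at hb
      have h0 : 0 < i' := Nat.pos_of_ne_zero hb.1
      have h1 : i' < k - 1 := lt_of_le_of_ne (Nat.le_sub_one_of_lt hik) hb.2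
      rw [hDint i' h0 h1]
      have e1 : h' (b i') ≤ h' (b (i' + 1)) :=
        hh'.monotone (hjmin' _ (by omega))
      have e2 : h' (b i') ≤ h' (b (i' - 1)) :=
        hh'.monotone (hjmin' _ (by omega))
      have : 0 ≤ h' (b (i' + 1)) - 2 * h' (b i') + h' (b (i' - 1)) := by linarith
      have hk2 : (0:ℝ) ≤ (k : ℝ) ^ 2 := by positivity
      exact mul_nonneg hk2 this
  have hbj : b j ≤ a j := by
    have h1 := hupd j hjk
    have h2 : τ * φ j * D j ≤ 0 :=
      mul_nonpos_of_nonneg_of_nonpos (mul_nonneg hτ.le (hφ j hjk)) hDj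
    linarith
  have hbi : a i' ≤ b i' := by
    have h1 := hupd i' hik
    have h2 : 0 ≤ τ * φ i' * D i' :=
      mul_nonneg (mul_nonneg hτ.le (hφ i' hik)) hDi
    linarith
  intro i hi
  constructor
  · exact le_trans (le_trans (ha i' hik).1 hbi) (hjmin' i hi)
  · exact le_trans (hjmax' i hi) (le_trans hbj (ha j hjk).2)
end
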